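/- Let M₁ and M₂ be effective t-motifs over K with M₁ analytically trivial, i.e. M₁ ⊗ K†{t} admits a K†{t}-basis of σ-invariant elements (assume ‖θ‖ > 1). If f ∈ Hom_σ(M₁,M₂) is a morphism such that the induced map f ⊗ id : M₁ ⊗ K†{t} → M₂ ⊗ K†{t} sends every σ-invariant element of M₁ ⊗ K†{t} to 0, then f = 0. (Faithfulness of the functor H_an(−,k[t]) on analytically trivial t-motifs.) -/

import Mathlib

/-!
STATEMENT 10. Setting as in Statements 8–9: effective t-motifs `Mᵢ` over `K` are
represented by column modules `Fin rᵢ → K[t]` with `σᵢ(v) = Sᵢ ⬝ τ(v)`,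
`det Sᵢ = uᵢ (t-θ)^{dᵢ}`; `K† = Kd ⊇ K` algebraically closed, complete w.r.t. a
nontrivial nonarchimedean absolute value, `‖θ‖ > 1`.  A morphism `f ∈ Hom_σ(M₁,M₂)` is
a matrix `F` over `K[t]` with `F·S₁ = S₂·τ(F)`, and `f ⊗ id` acts on
`M₁ ⊗ K†{t}` (columns with restricted entries) by `v ↦ F·v`.

Statement: `M₁` is analytically trivial (it has a σ-invariant `K†{t}`-basis, encoded by
an over-`K†{t}`-invertible matrix `E` with restricted entries and σ-invariant columns);
if `f ⊗ id` kills every σ-invariant element of `M₁ ⊗ K†{t}` then `f = 0`.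
-/

open Polynomial

/-- Restricted power series: the coefficients tend to `0`. -/
def IsRestricted (Kd : Type) [NormedField Kd] (f : PowerSeries Kd) : Prop :=
  Filter.Tendsto (fun i => ‖(PowerSeries.coeff i) f‖) Filter.atTop (nhds 0)

/-!
The σ-invariant columns of `E` form a `K†{t}`-basis of `M₁ ⊗ K†{t}`, so a `K†{t}`-linear
map vanishing on them vanishes identically; since `K[t] → K†{t}` is injective, `f = 0`.
-/

namespace Matrix

variable {m n R : Type*} [Fintype n] [Semiring R]

theorem mul_eq_zero_of_mulVec_col_eq_zero {A : Matrix m n R} {E : Matrix n n R}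
    (h : ∀ j, A *ᵥ E.col j = 0) : A * E = 0 := by
  ext i j
  simpa [mul_apply, mulVec, dotProduct] using congrFun (h j) i

theorem eq_zero_of_mulVec_col_eq_zero_of_mul_eq_one [DecidableEq n] {A : Matrix m n R}
    {E E' : Matrix n n R}
    (h : ∀ j, A *ᵥ E.col j = 0) (hE : E * E' = 1) : A = 0 :=
  calc A = A * E * E' := by rw [Matrix.mul_assoc, hE, Matrix.mul_one]
    _ = 0 := by rw [mul_eq_zero_of_mulVec_col_eq_zero h, Matrix.zero_mul]

end Matrix

theorem Polynomial.coeToPowerSeries_comp_mapRingHom_injective {R S : Type*} [CommSemiring R]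
    [CommSemiring S] {f : R →+* S} (hf : Function.Injective f) :
    Function.Injective (coeToPowerSeries.ringHom.comp (mapRingHom f)) :=
  (coe_injective S).comp (map_injective f hf)

theorem stmt_10
    (p n : ℕ) [Fact p.Prime]
    (K : Type) [Field K]
    (Kd : Type) [NontriviallyNormedField Kd]
    [CharP Kd p] [Algebra K Kd]
    (r₁ r₂ : ℕ)
    (S₁' : Matrix (Fin r₁) (Fin r₁) (PowerSeries Kd))
    -- `M₁` is analytically trivial:
    (hat : ∃ E E' : Matrix (Fin r₁) (Fin r₁) (PowerSeries Kd),
      (∀ i j, IsRestricted Kd (E i j)) ∧ (∀ i j, IsRestricted Kd (E' i j)) ∧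
      (∀ j, S₁'.mulVec
          (fun i => PowerSeries.map (iterateFrobenius Kd p n) (E i j)) =
        fun i => E i j) ∧
      E * E' = 1 ∧ E' * E = 1)
    -- a morphism `f : M₁ → M₂`:
    (F : Matrix (Fin r₂) (Fin r₁) (Polynomial K))
    -- `f ⊗ id` kills every σ-invariant element of `M₁ ⊗ K†{t}`:
    (hkill : ∀ v : Fin r₁ → PowerSeries Kd, (∀ i, IsRestricted Kd (v i)) →
      S₁'.mulVec (fun j => PowerSeries.map (iterateFrobenius Kd p n) (v j)) = v →
      (F.map (Polynomial.coeToPowerSeries.ringHom.comp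
          (Polynomial.mapRingHom (algebraMap K Kd)))).mulVec v = 0) :
    F = 0 := by
  obtain ⟨E, E', hE, -, hE_fixed, hEE', -⟩ := hat
  have hF_map : F.map (coeToPowerSeries.ringHom.comp (mapRingHom (algebraMap K Kd))) = 0 :=
    Matrix.eq_zero_of_mulVec_col_eq_zero_of_mul_eq_one
      (fun j => hkill _ (fun i => hE i j) (hE_fixed j)) hEE'
  exact Matrix.map_injective
    (coeToPowerSeries_comp_mapRingHom_injective (algebraMap K Kd).injective)
    (hF_map.trans (Matrix.map_zero _ (map_zero _)).symm)
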